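/- Let A₁, A₂, A₃, A₄ be a partition of {0,1,...,n} into four nonempty disjoint subsets whose union is everything. Define the intersection number of a subset S (with 2 ≤ |S| ≤ n−1) with the F-curve C_{A₁,A₂,A₃,A₄} as: 1 if S = A_i ∪ A_j for some i ≠ j; −1 if S = A_i or Sᶜ = A_i for some i; 0 otherwise. Suppose m ∈ S, {m} is not equal to any block A_i, and the intersection number of S is nonzero. Then the intersection number of ψ_m(S) = (Sᶜ ∪ {m}) \ {0} is 0. -/

import Mathlib

def psim (n : ℕ) (m : Fin (n + 1)) (A : Set (Fin (n + 1))) : Set (Fin (n + 1)) :=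
  (Aᶜ ∪ {m}) \ {0}

open Classical in
/-- Intersection number of the boundary divisor `D_S` with the `F`-curve
`C_{A₁,A₂,A₃,A₄}`. -/
noncomputable def fInt (n : ℕ) (A : Fin 4 → Set (Fin (n + 1)))
    (S : Set (Fin (n + 1))) : ℤ :=
  if ∃ i j : Fin 4, i ≠ j ∧ S = A i ∪ A j then 1
  else if ∃ i : Fin 4, S = A i ∨ Sᶜ = A i then -1
  else 0

/-!
A set `U` with `fInt n A U ≠ 0` is a union of blocks, so it never splits a block: every `A b`
lies inside `U` or misses it. Since `m ∈ S`, the block `A b` containing `m` lies inside `S`;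
then `ψ_m(S)` meets `A b` exactly in `{m}`, which is a proper subset of `A b` because
`A b ≠ {m}`. So `ψ_m(S)` splits `A b` and its intersection number vanishes.
-/

lemma Pairwise.subset_or_disjoint {ι α : Type*} {A : ι → Set α}
    (hA : Pairwise (Function.onFun Disjoint A)) (b i : ι) :
    A b ⊆ A i ∨ Disjoint (A b) (A i) := by
  rcases eq_or_ne b i with rfl | hbi
  · exact .inl le_rfl
  · exact .inr (hA hbi)

lemma fInt_ne_zero_iff {n : ℕ} {A : Fin 4 → Set (Fin (n + 1))} {U : Set (Fin (n + 1))} :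
    fInt n A U ≠ 0 ↔
      (∃ i j : Fin 4, i ≠ j ∧ U = A i ∪ A j) ∨ ∃ i : Fin 4, U = A i ∨ Uᶜ = A i := by
  unfold fInt
  split_ifs <;> simp_all

lemma subset_or_disjoint_of_fInt_ne_zero {n : ℕ} {A : Fin 4 → Set (Fin (n + 1))}
    (hA : Pairwise (Function.onFun Disjoint A)) {U : Set (Fin (n + 1))}
    (hU : fInt n A U ≠ 0) (b : Fin 4) : A b ⊆ U ∨ Disjoint (A b) U := by
  rcases fInt_ne_zero_iff.1 hU with ⟨i, j, -, rfl⟩ | ⟨i, rfl | hUi⟩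
  · rcases hA.subset_or_disjoint b i with hi | hi
    · exact .inl (hi.trans Set.subset_union_left)
    rcases hA.subset_or_disjoint b j with hj | hj
    · exact .inl (hj.trans Set.subset_union_right)
    · exact .inr (hi.union_right hj)
  · exact hA.subset_or_disjoint b i
  · rw [← compl_compl U, hUi, Set.subset_compl_iff_disjoint_right,
      Set.disjoint_compl_right_iff_subset]
    exact (hA.subset_or_disjoint b i).symm

theorem stmt_7_general (n : ℕ) (A : Fin 4 → Set (Fin (n + 1)))
    (hdisj : Pairwise (Function.onFun Disjoint A))
    (hcover : (⋃ i, A i) = Set.univ)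
    (m : Fin (n + 1)) (hm : m ≠ 0)
    (S : Set (Fin (n + 1)))
    (hmS : m ∈ S) (hblock : ∀ i, A i ≠ {m})
    (hnz : fInt n A S ≠ 0) :
    fInt n A (psim n m S) = 0 := by
  obtain ⟨b, hb⟩ : ∃ b, m ∈ A b := Set.mem_iUnion.1 (hcover ▸ Set.mem_univ m)
  have hbS : A b ⊆ S :=
    (subset_or_disjoint_of_fInt_ne_zero hdisj hnz b).resolve_right
      (Set.not_disjoint_iff.2 ⟨m, hb, hmS⟩)
  obtain ⟨x, hx, hxm⟩ : ∃ x ∈ A b, x ≠ m := by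
    by_contra! h
    exact hblock b (Set.eq_singleton_iff_unique_mem.2 ⟨hb, h⟩)
  by_contra hT
  rcases subset_or_disjoint_of_fInt_ne_zero hdisj hT b with hsub | hdis
  · obtain ⟨hxS | rfl, -⟩ := hsub hx
    exacts [hxS (hbS hx), hxm rfl]
  · exact Set.disjoint_left.1 hdis hb ⟨.inr rfl, hm⟩

theorem stmt_7 (n : ℕ) (hn : 4 ≤ n) (A : Fin 4 → Set (Fin (n + 1)))
    (hdisj : Pairwise (Function.onFun Disjoint A))
    (hne : ∀ i, (A i).Nonempty) (hcover : (⋃ i, A i) = Set.univ)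
    (m : Fin (n + 1)) (hm : m ≠ 0)
    (S : Set (Fin (n + 1))) (hcard1 : 2 ≤ S.ncard) (hcard2 : S.ncard ≤ n - 1)
    (hmS : m ∈ S) (hblock : ∀ i, A i ≠ {m})
    (hnz : fInt n A S ≠ 0) :
    fInt n A (psim n m S) = 0 :=
  stmt_7_general n A hdisj hcover m hm S hmS hblock hnz
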